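/- For each i, let m*_i denote the transition density (off the diagonal) of the Metropolis–Hastings chain with symmetric Gaussian proposal q(x,y) = N(y; x, ηI) targeting p*_i(x) ∝ exp(−β_i f(x)), and let m̃_i denote the transition density of the Metropolis–Hastings chain with the same proposal targeting p̃_i(x) ∝ ∑_{j=1}^n w_j exp(−(β_i/2)(x−μ_j)ᵀΣ⁻¹(x−μ_j)). If w_min = min_{1≤j≤n} w_j > 0, then for all x ≠ y in ℝ^d, m̃_i(x,y) ≤ (1/w_min²) m*_i(x,y). -/

import Mathlib

open MeasureTheory Matrix

noncomputable section

/-- Quadratic form `v ↦ vᵀ Σ⁻¹ v`. -/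
def quadForm {d : ℕ} (Sig : Matrix (Fin d) (Fin d) ℝ) (v : Fin d → ℝ) : ℝ :=
  v ⬝ᵥ (Sig⁻¹ *ᵥ v)

/-- The Gaussian mixture potential `f`. -/
def mixPotential {d n : ℕ} (Sig : Matrix (Fin d) (Fin d) ℝ) (μ : Fin n → Fin d → ℝ)
    (w : Fin n → ℝ) (x : Fin d → ℝ) : ℝ :=
  -Real.log (∑ j, w j * Real.exp (-(1 / 2) * quadForm Sig (x - μ j)))

/-- Density of the symmetric Gaussian proposal `N(y; x, ηI)`. -/
def propDens (d : ℕ) (η : ℝ) (x y : Fin d → ℝ) : ℝ :=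
  (2 * Real.pi * η) ^ (-(d : ℝ) / 2) * Real.exp (-(∑ k, (y k - x k) ^ 2) / (2 * η))

/-!
Write `aⱼ(z) = exp(-½ (z-μⱼ)ᵀΣ⁻¹(z-μⱼ))` and `S = ∑ wⱼ aⱼ`. Then `exp(-β f) = S ^ β`, while the
tempered mixture is `T = ∑ wⱼ aⱼ ^ β`. Concavity of `t ↦ t ^ β` gives `T ≤ S ^ β`, and bounding
`S` by the largest `aₘ` gives `w_min S ^ β ≤ wₘ aₘ ^ β ≤ T`. Hence the acceptance ratio of the
tempered chain is at most `1 / w_min` times that of the target chain, and `1 / w_min ≤ 1 / w_min²`.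
-/

open Finset

section WeightedPowerMean

variable {ι : Type*} [Fintype ι] {w a : ι → ℝ} {β : ℝ}

theorem sum_mul_rpow_le_rpow_sum_mul (hw : ∀ i, 0 ≤ w i) (hw1 : ∑ i, w i = 1)
    (ha : ∀ i, 0 ≤ a i) (hβ0 : 0 ≤ β) (hβ1 : β ≤ 1) :
    ∑ i, w i * a i ^ β ≤ (∑ i, w i * a i) ^ β := by
  simpa only [smul_eq_mul] using (Real.concaveOn_rpow hβ0 hβ1).le_map_sum
    (fun i _ => hw i) hw1 (fun i _ => Set.mem_Ici.2 (ha i))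

theorem iInf_mul_rpow_sum_mul_le_sum_mul_rpow (hw : ∀ i, 0 ≤ w i) (hw1 : ∑ i, w i = 1)
    (ha : ∀ i, 0 ≤ a i) (hβ0 : 0 ≤ β) :
    (⨅ i, w i) * (∑ i, w i * a i) ^ β ≤ ∑ i, w i * a i ^ β := by
  obtain ⟨m, -, hm⟩ := exists_max_image univ a (nonempty_of_sum_ne_zero (hw1.trans_ne one_ne_zero))
  have hmean_le : ∑ i, w i * a i ≤ a m := calc
    ∑ i, w i * a i ≤ ∑ i, w i * a m :=
      sum_le_sum fun i _ => mul_le_mul_of_nonneg_left (hm i (mem_univ i)) (hw i)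
    _ = a m := by rw [← sum_mul, hw1, one_mul]
  calc (⨅ i, w i) * (∑ i, w i * a i) ^ β ≤ w m * a m ^ β :=
        mul_le_mul (ciInf_le (Set.finite_range w).bddBelow m)
          (Real.rpow_le_rpow (sum_nonneg fun i _ => mul_nonneg (hw i) (ha i)) hmean_le hβ0)
          (Real.rpow_nonneg (sum_nonneg fun i _ => mul_nonneg (hw i) (ha i)) _) (hw m)
    _ ≤ ∑ i, w i * a i ^ β :=
        single_le_sum (f := fun i => w i * a i ^ β)
          (fun i _ => mul_nonneg (hw i) (Real.rpow_nonneg (ha i) _)) (mem_univ m)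

theorem iInf_pos_of_sum_eq_one (hw : ∀ i, 0 < w i) (hw1 : ∑ i, w i = 1) : 0 < ⨅ i, w i := by
  have := univ_nonempty_iff.mp (nonempty_of_sum_ne_zero (hw1.trans_ne one_ne_zero))
  obtain ⟨m, hm⟩ := exists_eq_ciInf_of_finite (f := w)
  exact hm ▸ hw m

theorem iInf_le_one_of_sum_eq_one (hw : ∀ i, 0 ≤ w i) (hw1 : ∑ i, w i = 1) : ⨅ i, w i ≤ 1 := by
  obtain ⟨m, -⟩ := nonempty_of_sum_ne_zero (hw1.trans_ne one_ne_zero)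
  exact (ciInf_le (Set.finite_range w).bddBelow m).trans
    (hw1 ▸ single_le_sum (fun i _ => hw i) (mem_univ m))

end WeightedPowerMean

theorem div_le_inv_mul_div_of_le_of_mul_le {c t₁ t₂ u₁ u₂ : ℝ} (hc : 0 < c) (hu₁ : 0 < u₁)
    (ht₂ : 0 ≤ t₂) (h₂ : t₂ ≤ u₂) (h₁ : c * u₁ ≤ t₁) : t₂ / t₁ ≤ c⁻¹ * (u₂ / u₁) :=
  calc t₂ / t₁ ≤ u₂ / (c * u₁) := div_le_div₀ (ht₂.trans h₂) h₂ (mul_pos hc hu₁) h₁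
    _ = c⁻¹ * (u₂ / u₁) := by ring

theorem min_one_le_mul_min_one {K r r' : ℝ} (hK : 1 ≤ K) (h : r ≤ K * r') :
    min 1 r ≤ K * min 1 r' := by
  rw [mul_min_of_nonneg _ _ (zero_le_one.trans hK), mul_one]
  exact min_le_min hK h

theorem exp_neg_div_two_mul_eq_rpow (β q : ℝ) :
    Real.exp (-(β / 2) * q) = Real.exp (-(1 / 2) * q) ^ β := by
  rw [← Real.exp_mul]
  ring_nf

theorem exp_neg_mul_mixPotential {d n : ℕ} {Sig : Matrix (Fin d) (Fin d) ℝ}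
    {μ : Fin n → Fin d → ℝ} {w : Fin n → ℝ} {x : Fin d → ℝ} (β : ℝ)
    (hpos : 0 < ∑ j, w j * Real.exp (-(1 / 2) * quadForm Sig (x - μ j))) :
    Real.exp (-β * mixPotential Sig μ w x)
      = (∑ j, w j * Real.exp (-(1 / 2) * quadForm Sig (x - μ j))) ^ β := by
  rw [Real.rpow_def_of_pos hpos, mixPotential]
  ring_nf

theorem stmt8_general (d n : ℕ)
    (μ : Fin n → Fin d → ℝ)
    (Sig : Matrix (Fin d) (Fin d) ℝ)
    (w : Fin n → ℝ) (hw : ∀ j, 0 < w j) (hw1 : ∑ j, w j = 1)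
    (η : ℝ) (hη : 0 < η)
    (β : ℝ) (hβ0 : 0 < β) (hβ1 : β ≤ 1)
    (Zs Zt : ℝ)
    (hZspos : 0 < Zs)
    (hZtpos : 0 < Zt)
    (pstar ptilde : (Fin d → ℝ) → ℝ)
    (hpstar : ∀ x, pstar x = Real.exp (-β * mixPotential Sig μ w x) / Zs)
    (hptilde : ∀ x, ptilde x = (∑ j, w j * Real.exp (-(β / 2) * quadForm Sig (x - μ j))) / Zt) :
    ∀ x y : Fin d → ℝ, x ≠ y →
      propDens d η x y * min 1 (ptilde y / ptilde x)
        ≤ (1 / (⨅ j, w j) ^ 2) * (propDens d η x y * min 1 (pstar y / pstar x)) := by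
  intro x y _
  set a : (Fin d → ℝ) → Fin n → ℝ := fun z j => Real.exp (-(1 / 2) * quadForm Sig (z - μ j))
  set c := ⨅ j, w j
  have hne : (univ : Finset (Fin n)).Nonempty := nonempty_of_sum_ne_zero (hw1.trans_ne one_ne_zero)
  have hS : ∀ z, 0 < ∑ j, w j * a z j := fun z =>
    sum_pos (fun j _ => mul_pos (hw j) (Real.exp_pos _)) hne
  have hc : 0 < c := iInf_pos_of_sum_eq_one hw hw1
  have hc1 : c ≤ 1 := iInf_le_one_of_sum_eq_one (fun j => (hw j).le) hw1
  have hratio : ptilde y / ptilde x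
      ≤ c⁻¹ * ((∑ j, w j * a y j) ^ β / (∑ j, w j * a x j) ^ β) := by
    simp only [hptilde, div_div_div_cancel_right₀ hZtpos.ne', exp_neg_div_two_mul_eq_rpow β]
    exact div_le_inv_mul_div_of_le_of_mul_le hc (Real.rpow_pos_of_pos (hS x) β)
      (sum_nonneg fun j _ => mul_nonneg (hw j).le (Real.rpow_nonneg (Real.exp_pos _).le _))
      (sum_mul_rpow_le_rpow_sum_mul (fun j => (hw j).le) hw1 (fun j => (Real.exp_pos _).le)
        hβ0.le hβ1)
      (iInf_mul_rpow_sum_mul_le_sum_mul_rpow (fun j => (hw j).le) hw1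
        (fun j => (Real.exp_pos _).le) hβ0.le)
  have hK : c⁻¹ ≤ 1 / c ^ 2 := by
    rw [one_div]
    exact inv_anti₀ (by positivity) (by nlinarith)
  rw [hpstar, hpstar, div_div_div_cancel_right₀ hZspos.ne', exp_neg_mul_mixPotential β (hS x),
    exp_neg_mul_mixPotential β (hS y), mul_left_comm]
  gcongr
  · unfold propDens
    positivity
  refine min_one_le_mul_min_one ((one_le_inv₀ hc).2 hc1 |>.trans hK) (hratio.trans ?_)
  gcongr
  exact div_nonneg (Real.rpow_nonneg (hS y).le _) (Real.rpow_nonneg (hS x).le _)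

theorem stmt8 (d n : ℕ) (hn : 0 < n)
    (μ : Fin n → Fin d → ℝ)
    (Sig : Matrix (Fin d) (Fin d) ℝ) (hSig : Sig.PosDef)
    (w : Fin n → ℝ) (hw : ∀ j, 0 < w j) (hw1 : ∑ j, w j = 1)
    (η : ℝ) (hη : 0 < η)
    (β : ℝ) (hβ0 : 0 < β) (hβ1 : β ≤ 1)
    (Zs Zt : ℝ)
    (hZs : Zs = ∫ x, Real.exp (-β * mixPotential Sig μ w x)) (hZspos : 0 < Zs)
    (hZt : Zt = ∫ x, ∑ j, w j * Real.exp (-(β / 2) * quadForm Sig (x - μ j)))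
    (hZtpos : 0 < Zt)
    (pstar ptilde : (Fin d → ℝ) → ℝ)
    (hpstar : ∀ x, pstar x = Real.exp (-β * mixPotential Sig μ w x) / Zs)
    (hptilde : ∀ x, ptilde x = (∑ j, w j * Real.exp (-(β / 2) * quadForm Sig (x - μ j))) / Zt) :
    ∀ x y : Fin d → ℝ, x ≠ y →
      propDens d η x y * min 1 (ptilde y / ptilde x)
        ≤ (1 / (⨅ j, w j) ^ 2) * (propDens d η x y * min 1 (pstar y / pstar x)) :=
  stmt8_general d n μ Sig w hw hw1 η hη β hβ0 hβ1 Zs Zt hZspos hZtpos pstar ptilde hpstar hptilde
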